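/- arXiv:2103.09636 — 5 statements merged into one kernel-verified Lean document; each statement's English description precedes it below -/
import Mathlib

section
/- Let T = ⟨Γ, L, R⟩ be a rule system on presheaves over a small category C, with Γ small, and let p be a presheaf. Write D for the diagram D_T(p) : L/p ⥤ GM. Let M and M' = M ∪ {m} be partial decompositions of p, with m a maximal object of L/p not in M. Let S_{M,m} be the diagram consisting of, for every object n of the restriction M̃ and every morphism e : n → m in L/p, the span T̃_p(M) ⟵ D(n) ⟶ D(m), whose left leg is the colimit component (T̃_p(M))_n and whose right leg is D(e). Then the colimit of S_{M,m} (a 'generalized pushout'), with structure morphisms t : T̃_p(M) ⟶ Colim(S_{M,m}) and c : D(m) ⟶ Colim(S_{M,m}), yields a colimit cocone of the restriction of D to M̃', with the same apex Colim(S_{M,m}) and with components given at each n in M̃ by t ∘ (T̃_p(M))_n, and at each object n' with a morphism e : n' → m by c ∘ D(e). -/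
open CategoryTheory CategoryTheory.Limits

universe u

variable (C : Type u) [SmallCategory C]

/-- The category of presheaves over `C`. -/
abbrev GM := Cᵒᵖ ⥤ Type u

/-- A rule system `⟨Γ, L, R⟩` on presheaves over `C`: a small category `Γ` of rules,
a full and faithful left-hand-side functor `L` sending every morphism to a monomorphism,
and a right-hand-side functor `R` sending every morphism to a monomorphism. -/
structure RuleSystem where
  Γ : Type u
  [catΓ : SmallCategory Γ]
  L : Γ ⥤ GM C
  R : Γ ⥤ GM C
  [fullL : L.Full]
  [faithfulL : L.Faithful]
  monoL : ∀ {a b : Γ} (e : a ⟶ b), Mono (L.map e)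
  monoR : ∀ {a b : Γ} (e : a ⟶ b), Mono (R.map e)

attribute [instance] RuleSystem.catΓ RuleSystem.fullL RuleSystem.faithfulL

variable {C}

/-- The instance category `L/p`: objects are pairs `⟨γ, m⟩` with `m : L(γ) ⟶ p` a
monomorphism; morphisms `⟨γ, m⟩ ⟶ ⟨γ', m'⟩` are the morphisms `e : γ ⟶ γ'` of `Γ` with
`m' ∘ L(e) = m`. -/
def Inst (T : RuleSystem C) (p : GM C) :=
  ObjectProperty.FullSubcategory (fun f : CostructuredArrow T.L p => Mono f.hom)

instance (T : RuleSystem C) (p : GM C) : Category (Inst T p) :=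
  ObjectProperty.FullSubcategory.category _

/-- The diagram `D_T(p) : L/p ⥤ GM` sending `⟨γ, m⟩` to `R(γ)` and `e` to `R(e)`. -/
def DT (T : RuleSystem C) (p : GM C) : Inst T p ⥤ GM C :=
  ObjectProperty.ι _ ⋙ CostructuredArrow.proj T.L p ⋙ T.R

/-- An object of the instance category is maximal if every morphism out of it admits a
morphism back. -/
def MaximalInst {T : RuleSystem C} {p : GM C} (n : Inst T p) : Prop :=
  ∀ m : Inst T p, (n ⟶ m) → Nonempty (m ⟶ n)

/-- Objects of the subcategory `M̃` associated to a set `M` of instances: the elements of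
`M` together with all instances admitting a morphism into some element of `M`. -/
def InTilde {T : RuleSystem C} {p : GM C} (M : Set (Inst T p)) (n : Inst T p) : Prop :=
  n ∈ M ∨ ∃ m ∈ M, Nonempty (n ⟶ m)

theorem inTilde_mono {T : RuleSystem C} {p : GM C} {M M' : Set (Inst T p)} (h : M ⊆ M')
    {n : Inst T p} : InTilde M n → InTilde M' n := by
  rintro (hn | ⟨m, hm, hnm⟩)
  · exact Or.inl (h hn)
  · exact Or.inr ⟨m, h hm, hnm⟩

/-- The subcategory `M̃` of `L/p`: its objects are the elements of `M` together with all
instances admitting a morphism into some element of `M`; its non-identity morphisms are the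
morphisms of `L/p` whose target lies in `M`. -/
def TildeCat (T : RuleSystem C) (p : GM C) (M : Set (Inst T p)) :=
  {n : Inst T p // InTilde M n}

instance (T : RuleSystem C) (p : GM C) (M : Set (Inst T p)) : Category (TildeCat T p M) where
  Hom n n' := {e : n.1 ⟶ n'.1 // n'.1 ∈ M ∨ n = n'}
  id n := ⟨𝟙 n.1, Or.inr rfl⟩
  comp {n n' n''} e f := ⟨e.1 ≫ f.1, by
    rcases f.2 with h | h
    · exact Or.inl h
    · rcases e.2 with h' | h'
      · exact Or.inl (h ▸ h')
      · exact Or.inr (h'.trans h)⟩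
  id_comp f := Subtype.ext (Category.id_comp _)
  comp_id f := Subtype.ext (Category.comp_id _)
  assoc f g h := Subtype.ext (Category.assoc _ _ _)

/-- The inclusion of the subcategory `M̃` into the instance category `L/p`. -/
def tildeIncl (T : RuleSystem C) (p : GM C) (M : Set (Inst T p)) :
    TildeCat T p M ⥤ Inst T p where
  obj n := n.1
  map e := e.1

/-- The restriction of the diagram `D_T(p)` to the subcategory `M̃`. -/
def DTilde (T : RuleSystem C) (p : GM C) (M : Set (Inst T p)) : TildeCat T p M ⥤ GM C :=
  tildeIncl T p M ⋙ DT T p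


/-- The suture diagram `S_{M,m}`: a multispan with one span
`T̃_p(M) ⟵ D(n) ⟶ D(m)` for every object `n` of `M̃` and every morphism `e : n ⟶ m` of
`L/p`; the left leg is the colimit component `(T̃_p(M))_n` and the right leg is `D(e)`.
The index `false` corresponds to `T̃_p(M)` and the index `true` to `D(m)`. -/
noncomputable def suture (T : RuleSystem C) (p : GM C) (M : Set (Inst T p))
    (m : Inst T p) : MultispanIndex
      { L := Σ n : TildeCat T p M, (n.1 ⟶ m)
        R := Bool
        fst := fun _ => false
        snd := fun _ => true } (GM C) where
  left x := (DTilde T p M).obj x.1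
  right b := match b with
    | false => colimit (DTilde T p M)
    | true => (DT T p).obj m
  fst x := colimit.ι (DTilde T p M) x.1
  snd x := (DT T p).map x.2

/-! Since `L/p` is a preorder, a cocone over `M̃' = (M ∪ {m})~` is determined by its
restriction to `M̃` (equivalently, by a map out of `T̃_p(M)`) together with its component at
`m`: every object of `M̃'` outside `M̃` maps to `m`, so its component is forced. The only
compatibility between the two pieces comes from the morphisms `n ⟶ m` with `n ∈ M̃`, and these
are exactly the spans of `S_{M,m}`. Thus cocones over `M̃'` and multicoforks of `S_{M,m}`
correspond, and a colimit multicofork yields a colimit cocone. -/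

namespace Inst

variable {T : RuleSystem C} {p : GM C}

-- `L` is faithful and the structure map of the target is mono, so `L/p` is a preorder.
theorem subsingleton_hom (a b : Inst T p) : Subsingleton (a ⟶ b) where
  allEq f g := by
    have : Mono b.obj.hom := b.property
    have hL : T.L.map f.hom.left = T.L.map g.hom.left := by
      rw [← cancel_mono b.obj.hom, CostructuredArrow.w f.hom, CostructuredArrow.w g.hom]
    exact InducedCategory.hom_ext (CostructuredArrow.hom_ext _ _ (T.L.map_injective hL))

end Inst

section

attribute [local instance] Inst.subsingleton_hom

variable {T : RuleSystem C} {p : GM C} {M : Set (Inst T p)} {m : Inst T p}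

theorem InTilde.nonempty_hom_of_insert {n : Inst T p} (hn : InTilde (insert m M) n)
    (hnM : ¬ InTilde M n) : Nonempty (n ⟶ m) := by
  rcases hn with hn | ⟨m', hm', ⟨e⟩⟩
  · rcases hn with rfl | hn
    · exact ⟨𝟙 n⟩
    · exact absurd (Or.inl hn) hnM
  · rcases hm' with rfl | hm'
    · exact ⟨e⟩
    · exact absurd (Or.inr ⟨m', hm', ⟨e⟩⟩) hnM

namespace TildeCat

def homOfMem {a b : TildeCat T p M} (f : a.1 ⟶ b.1) (hb : b.1 ∈ M) : a ⟶ b := ⟨f, Or.inl hb⟩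

variable (M m)

def inclusionInsert : TildeCat T p M ⥤ TildeCat T p (insert m M) where
  obj n := ⟨n.1, inTilde_mono (Set.subset_insert m M) n.2⟩
  map g := ⟨g.1, g.2.imp (fun h => Set.subset_insert m M h) (by rintro rfl; rfl)⟩

def insertPoint : TildeCat T p (insert m M) := ⟨m, Or.inl (Set.mem_insert m M)⟩

end TildeCat

namespace Suture

open TildeCat

variable (c : Multicofork (suture T p M m))

theorem ι_π_false_eq {n : Inst T p} (hn : InTilde M n) (e : n ⟶ m) :
    colimit.ι (DTilde T p M) ⟨n, hn⟩ ≫ c.π false = (DT T p).map e ≫ c.π true :=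
  c.condition ⟨⟨n, hn⟩, e⟩

-- Off `M̃`, an object of `M̃'` maps to `m`; since `L/p` is thin, the choice of map is irrelevant.
open Classical in
noncomputable def coconeApp (n : TildeCat T p (insert m M)) :
    (DTilde T p (insert m M)).obj n ⟶ c.pt :=
  if h : InTilde M n.1 then colimit.ι (DTilde T p M) ⟨n.1, h⟩ ≫ c.π false
  else (DT T p).map (n.2.nonempty_hom_of_insert h).some ≫ c.π true

theorem coconeApp_of_inTilde (n : TildeCat T p (insert m M)) (h : InTilde M n.1) :
    coconeApp c n = colimit.ι (DTilde T p M) ⟨n.1, h⟩ ≫ c.π false := by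
  rw [coconeApp, dif_pos h]
  rfl

theorem coconeApp_of_hom (n : TildeCat T p (insert m M)) (e : n.1 ⟶ m) :
    coconeApp c n = (DT T p).map e ≫ c.π true := by
  rw [coconeApp]
  split_ifs with h
  · exact ι_π_false_eq c h e
  · rw [Subsingleton.elim (n.2.nonempty_hom_of_insert h).some e]
    rfl

theorem coconeApp_insertPoint : coconeApp c (insertPoint M m) = c.π true := by
  rw [coconeApp_of_hom c _ (𝟙 m)]
  exact ((DT T p).map_id m).symm ▸ Category.id_comp _

-- `TildeCat` is a non-reducible subtype, which keeps `rw` and `simp` from reassociating the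
-- composites below; the associativity steps are therefore given as explicit terms.
theorem coconeApp_naturality {a b : TildeCat T p (insert m M)} (f : a ⟶ b) :
    (DT T p).map f.1 ≫ coconeApp c b = coconeApp c a := by
  obtain ⟨f, (hbm | hbM) | rfl⟩ := f
  · rw [coconeApp_of_hom c b (eqToHom hbm), coconeApp_of_hom c a (f ≫ eqToHom hbm),
      Functor.map_comp]
    exact (Category.assoc _ _ _).symm
  · have ha : InTilde M a.1 := Or.inr ⟨b.1, hbM, ⟨f⟩⟩
    rw [coconeApp_of_inTilde c b (Or.inl hbM), coconeApp_of_inTilde c a ha]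
    exact (Category.assoc _ _ _).symm.trans (congrArg (· ≫ c.π false)
      (colimit.w (DTilde T p M) (homOfMem (a := ⟨a.1, ha⟩) (b := ⟨b.1, Or.inl hbM⟩) f hbM)))
  · rw [Subsingleton.elim f (𝟙 a.1)]
    exact ((DT T p).map_id a.1).symm ▸ Category.id_comp _

noncomputable def cocone : Cocone (DTilde T p (insert m M)) where
  pt := c.pt
  ι :=
    { app := coconeApp c
      naturality _ _ f := (coconeApp_naturality c f).trans (Category.comp_id _).symm }

variable {c}

def restrictCocone (s : Cocone (DTilde T p (insert m M))) : Cocone (DTilde T p M) where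
  pt := s.pt
  ι :=
    { app n := s.ι.app ((inclusionInsert M m).obj n)
      naturality _ _ g := s.ι.naturality ((inclusionInsert M m).map g) }

noncomputable def multicoforkOfCocone (s : Cocone (DTilde T p (insert m M))) :
    Multicofork (suture T p M m) :=
  Multicofork.ofπ _ s.pt
    (fun | false => colimit.desc (DTilde T p M) (restrictCocone s)
         | true => s.ι.app (insertPoint M m))
    (by
      rintro ⟨n, e⟩
      change colimit.ι (DTilde T p M) n ≫ colimit.desc _ (restrictCocone s) = (DT T p).map e ≫ _
      rw [colimit.ι_desc]
      exact ((s.ι.naturality (homOfMem (a := (inclusionInsert M m).obj n) (b := insertPoint M m)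
        e (Set.mem_insert m M))).trans (Category.comp_id _)).symm)

theorem π_desc (hc : IsColimit c) (s : Cocone (DTilde T p (insert m M))) (b : Bool) :
    c.π b ≫ hc.desc (multicoforkOfCocone s) = (multicoforkOfCocone s).π b :=
  hc.fac _ _

theorem coconeApp_desc (hc : IsColimit c) (s : Cocone (DTilde T p (insert m M)))
    (n : TildeCat T p (insert m M)) :
    coconeApp c n ≫ hc.desc (multicoforkOfCocone s) = s.ι.app n := by
  by_cases h : InTilde M n.1
  · rw [coconeApp_of_inTilde c n h]
    exact (Category.assoc _ _ _).trans ((congrArg (colimit.ι (DTilde T p M) ⟨n.1, h⟩ ≫ ·)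
      (π_desc hc s false)).trans (colimit.ι_desc _ _))
  · obtain ⟨e⟩ := n.2.nonempty_hom_of_insert h
    rw [coconeApp_of_hom c n e]
    exact (Category.assoc _ _ _).trans ((congrArg ((DT T p).map e ≫ ·) (π_desc hc s true)).trans
      ((s.ι.naturality (homOfMem (b := insertPoint M m) e (Set.mem_insert m M))).trans
        (Category.comp_id _)))

theorem hom_ext (hc : IsColimit c) {X : GM C} {f g : c.pt ⟶ X}
    (h : ∀ n, coconeApp c n ≫ f = coconeApp c n ≫ g) : f = g := by
  refine Multicofork.IsColimit.hom_ext hc fun b => ?_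
  cases b
  · refine colimit.hom_ext fun n => ?_
    have := h ((inclusionInsert M m).obj n)
    rw [coconeApp_of_inTilde c _ n.2] at this
    exact (Category.assoc _ _ _).symm.trans (this.trans (Category.assoc _ _ _))
  · have := h (insertPoint M m)
    rwa [coconeApp_insertPoint] at this

noncomputable def isColimitCocone (hc : IsColimit c) : IsColimit (cocone c) where
  desc s := hc.desc (multicoforkOfCocone s)
  fac := coconeApp_desc hc
  uniq s _ hg := hom_ext hc fun n => (hg n).trans (coconeApp_desc hc s n).symm

end Suture

end

theorem stmt3_general (T : RuleSystem C) (p : GM C) (M : Set (Inst T p)) (m : Inst T p) :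
    ∃ (K : Cocone (DTilde T p (insert m M))) (_ : IsColimit K)
      (hpt : K.pt = multicoequalizer (suture T p M m)),
      (∀ (n : Inst T p) (hn : InTilde M n),
        K.ι.app ⟨n, inTilde_mono (Set.subset_insert m M) hn⟩ ≫ eqToHom hpt =
          colimit.ι (DTilde T p M) ⟨n, hn⟩ ≫
            Multicoequalizer.π (suture T p M m) false) ∧
      (∀ (n : Inst T p) (hn' : InTilde (insert m M) n) (e : n ⟶ m),
        K.ι.app ⟨n, hn'⟩ ≫ eqToHom hpt =
          (DT T p).map e ≫ Multicoequalizer.π (suture T p M m) true) := by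
  refine ⟨Suture.cocone (Multicoequalizer.multicofork _),
    Suture.isColimitCocone (colimit.isColimit _), rfl, fun n hn => ?_, fun n hn' e => ?_⟩
  · exact (Category.comp_id _).trans (Suture.coconeApp_of_inTilde _ ⟨n, _⟩ hn)
  · exact (Category.comp_id _).trans (Suture.coconeApp_of_hom _ ⟨n, hn'⟩ e)

/-- for partial decompositions `M` and
`M' = M ∪ {m}` of `p`, the colimit ("generalized pushout") of the suture diagram
`S_{M,m}`, with structure morphisms `t = π false : T̃_p(M) ⟶ Colim(S_{M,m})` and
`c = π true : D(m) ⟶ Colim(S_{M,m})`, yields a colimit cocone of the restriction of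
`D_T(p)` to `M̃'` with the same apex, whose component at each `n` of `M̃` is
`t ∘ (T̃_p(M))_n` and whose component at each object `n` with a morphism `e : n ⟶ m`
is `c ∘ D(e)`. -/
theorem stmt3 (T : RuleSystem C) (p : GM C) (M : Set (Inst T p)) (m : Inst T p)
    (hMmax : ∀ n ∈ M, MaximalInst n) (hm : MaximalInst m) (hmM : m ∉ M)
    (hMconn : IsConnected (TildeCat T p M))
    (hM'conn : IsConnected (TildeCat T p (insert m M))) :
    ∃ (K : Cocone (DTilde T p (insert m M))) (_ : IsColimit K)
      (hpt : K.pt = multicoequalizer (suture T p M m)),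
      (∀ (n : Inst T p) (hn : InTilde M n),
        K.ι.app ⟨n, inTilde_mono (Set.subset_insert m M) hn⟩ ≫ eqToHom hpt =
          colimit.ι (DTilde T p M) ⟨n, hn⟩ ≫
            Multicoequalizer.π (suture T p M m) false) ∧
      (∀ (n : Inst T p) (hn' : InTilde (insert m M) n) (e : n ⟶ m),
        K.ι.app ⟨n, hn'⟩ ≫ eqToHom hpt =
          (DT T p).map e ≫ Multicoequalizer.π (suture T p M m) true) :=
  stmt3_general T p M m
end

section
/- Let T = ⟨Γ, L, R⟩ be a rule system on presheaves over a small category C, with Γ small, and let p be a presheaf such that every object of the instance category L/p admits a morphism into some maximal object of L/p (this holds in particular when L/p is finite). Then the wide subcategory W of L/p — having all objects of L/p, and whose morphisms are the identities together with exactly those morphisms of L/p whose target is a maximal object — is final in L/p, i.e. the inclusion functor W ⥤ L/p is a final functor. -/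
open CategoryTheory CategoryTheory.Limits

universe u

variable (C : Type u) [SmallCategory C]

variable {C}

/-- The wide subcategory `W` of the instance category `L/p`: it has all objects of `L/p`
(wrapped), and its morphisms are the identities together with exactly the morphisms of
`L/p` whose target is a maximal object. -/
structure WideCat (T : RuleSystem C) (p : GM C) where
  obj : Inst T p

instance (T : RuleSystem C) (p : GM C) : Category (WideCat T p) where
  Hom n n' := {e : n.obj ⟶ n'.obj // MaximalInst n'.obj ∨ n = n'}
  id n := ⟨𝟙 n.obj, Or.inr rfl⟩
  comp {n n' n''} e f := ⟨e.1 ≫ f.1, by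
    rcases f.2 with h | h
    · exact Or.inl h
    · rcases e.2 with h' | h'
      · exact Or.inl (h ▸ h')
      · exact Or.inr (h'.trans h)⟩
  id_comp f := Subtype.ext (Category.id_comp _)
  comp_id f := Subtype.ext (Category.comp_id _)
  assoc f g h := Subtype.ext (Category.assoc _ _ _)

/-- The inclusion functor `W ⥤ L/p`. -/
def wideIncl (T : RuleSystem C) (p : GM C) : WideCat T p ⥤ Inst T p where
  obj n := n.obj
  map e := e.1

/-! Every morphism of `L/p` into a maximal object lies in `W`. Given `j : n ⟶ w`, choose
`g : w ⟶ m` with `m` maximal: both `j` and the identity of `n` then map in `n/W` to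
`j ≫ g : n ⟶ m`, so every object of `n/W` is joined to the identity of `n`. -/

namespace WideCat

variable {T : RuleSystem C} {p : GM C}

def homOfMaximal {n : WideCat T p} {m : Inst T p} (hm : MaximalInst m) (f : n.obj ⟶ m) :
    n ⟶ ⟨m⟩ :=
  ⟨f, Or.inl hm⟩

abbrev idArrow (n : Inst T p) : StructuredArrow n (wideIncl T p) :=
  StructuredArrow.mk (show n ⟶ (wideIncl T p).obj ⟨n⟩ from 𝟙 n)

theorem zigzag_idArrow {n m : Inst T p} (j : StructuredArrow n (wideIncl T p))
    (hm : MaximalInst m) (g : j.right.obj ⟶ m) : Zigzag j (idArrow n) :=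
  Zigzag.of_hom_inv (j₂ := StructuredArrow.mk (show n ⟶ (wideIncl T p).obj ⟨m⟩ from j.hom ≫ g))
    (StructuredArrow.homMk (homOfMaximal hm g) rfl)
    (StructuredArrow.homMk (homOfMaximal hm (j.hom ≫ g)) (Category.id_comp _))

end WideCat

/-- if every object of the instance category `L/p` admits a morphism into some
maximal object, then the wide subcategory `W` (all objects; morphisms the identities
together with the morphisms whose target is maximal) is final in `L/p`, i.e. the inclusion
functor `W ⥤ L/p` is a final functor. -/
theorem stmt4 (T : RuleSystem C) (p : GM C)
    (hmax : ∀ n : Inst T p, ∃ m : Inst T p, MaximalInst m ∧ Nonempty (n ⟶ m)) :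
    (wideIncl T p).Final := by
  refine ⟨fun n => ?_⟩
  have toId (j : StructuredArrow n (wideIncl T p)) : Zigzag j (WideCat.idArrow n) := by
    obtain ⟨m, hm, ⟨g⟩⟩ := hmax j.right.obj
    exact WideCat.zigzag_idArrow j hm g
  have : Nonempty (StructuredArrow n (wideIncl T p)) := ⟨WideCat.idArrow n⟩
  exact zigzag_isConnected fun j₁ j₂ => (toId j₁).trans (toId j₂).symm
end

section
/- Let T = ⟨Γ, L, R⟩ be a rule system on presheaves over a small category C, with Γ small, and let p be a presheaf such that every object of L/p admits a morphism into some maximal object of L/p. Let W be the wide subcategory of L/p having all objects and, as non-identity morphisms, exactly the morphisms of L/p whose target is a maximal object. Then the canonical morphism from the colimit of the restriction of D_T(p) to W into the colimit T̄(p) = Colim(D_T(p)), induced by the inclusion W ⥤ L/p, is an isomorphism. -/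
open CategoryTheory CategoryTheory.Limits

universe u

variable (C : Type u) [SmallCategory C]

variable {C}

/-! The inclusion `W ⥤ L/p` is final, so it does not change colimits. Finality asks that for
each `n : L/p` the category of arrows `n ⟶ w` into objects of `W` be connected. Every such
arrow `g : n ⟶ w` is linked to the identity of `n` by a cospan: choose a morphism `e : w ⟶ m`
into a maximal `m`; then `e` and `g ≫ e` are morphisms of `W`, as their target is maximal. -/

namespace CategoryTheory

theorem isConnected_of_forall_exists_cospan {J : Type*} [Category J] (j₀ : J)
    (h : ∀ j : J, ∃ t : J, Nonempty (j ⟶ t) ∧ Nonempty (j₀ ⟶ t)) : IsConnected J := by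
  have hzig : ∀ j : J, Zigzag j j₀ := fun j => by
    obtain ⟨t, ⟨f⟩, ⟨g⟩⟩ := h j
    exact (Zigzag.of_hom f).trans (Zigzag.of_inv g)
  have : Nonempty J := ⟨j₀⟩
  exact zigzag_isConnected fun j₁ j₂ => (hzig j₁).trans (hzig j₂).symm

end CategoryTheory

variable {T : RuleSystem C} {p : GM C}

def WideCat.homOfMaximal_s5 {n m : WideCat T p} (hm : MaximalInst m.obj) (e : n.obj ⟶ m.obj) :
    n ⟶ m :=
  ⟨e, Or.inl hm⟩

theorem wideIncl_final
    (hmax : ∀ n : Inst T p, ∃ m : Inst T p, MaximalInst m ∧ Nonempty (n ⟶ m)) :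
    (wideIncl T p).Final where
  out n := by
    refine isConnected_of_forall_exists_cospan
      (StructuredArrow.mk (Y := (⟨n⟩ : WideCat T p)) (𝟙 n)) fun g => ?_
    obtain ⟨m, hm, ⟨e⟩⟩ := hmax g.right.obj
    exact ⟨StructuredArrow.mk (Y := (⟨m⟩ : WideCat T p)) (g.hom ≫ e),
      ⟨StructuredArrow.homMk (WideCat.homOfMaximal_s5 hm e) rfl⟩,
      ⟨StructuredArrow.homMk (WideCat.homOfMaximal_s5 hm (g.hom ≫ e)) (Category.id_comp _)⟩⟩

/-- if every object of the instance category `L/p` admits a morphism into some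
maximal object, then the canonical morphism — induced by the inclusion `W ⥤ L/p` of the
wide subcategory of morphisms into maximal objects — from the colimit of the restriction of
`D_T(p)` to `W` into the colimit `T̄(p) = colimit (D_T(p))` is an isomorphism. -/
theorem stmt5 (T : RuleSystem C) (p : GM C)
    (hmax : ∀ n : Inst T p, ∃ m : Inst T p, MaximalInst m ∧ Nonempty (n ⟶ m)) :
    IsIso (colimit.pre (DT T p) (wideIncl T p)) := by
  have := wideIncl_final hmax
  infer_instance
end

section
/- Let Γ be a category, C a small category, GM = Set^{C^op}, y : C ⥤ GM the Yoneda embedding, and R : Γ ⥤ GM a functor satisfying the incrementality condition. Let z be a zig-zag in Γ, c an object of C, and x_0 : y(c) ⟶ R(z_0), x_{|z|} : y(c) ⟶ R(z_{|z|}) morphisms such that z links x_0 and x_{|z|} through R. Then there exists a zig-zag z' in Γ of length 2, of the form z_0 ⟵ z'_1 ⟶ z_{|z|} (i.e. morphisms π₁ : z'_1 → z_0 and π₂ : z'_1 → z_{|z|}), that also links x_0 and x_{|z|} through R; explicitly, there is x : y(c) ⟶ R(z'_1) with x_0 = R(π₁) ∘ x and x_{|z|} = R(π₂) ∘ x. 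-/
open CategoryTheory CategoryTheory.Limits

universe w v u

/-- A zig-zag in a category `I`: a length `len`, a sequence of `len + 1` objects, and for
each `k < len` a morphism between consecutive objects, in either direction. -/
structure Zigzag (I : Type u) [Category.{v} I] where
  len : ℕ
  obj : Fin (len + 1) → I
  hom : ∀ k : Fin len, (obj k.castSucc ⟶ obj k.succ) ⊕ (obj k.succ ⟶ obj k.castSucc)

/-- A zig-zag `z` links `f₀ : a ⟶ F.obj (z.obj 0)` and `fₙ : a ⟶ F.obj (z.obj last)`
through a functor `F` if there is a family of morphisms `a ⟶ F.obj (z.obj k)` commuting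
with the (images under `F` of the) zig-zag morphisms, with prescribed endpoints. -/
def Zigzag.Links {I : Type u} [Category.{v} I] {Y : Type w} [Category.{v} Y]
    (z : Zigzag I) (F : I ⥤ Y) {a : Y}
    (f₀ : a ⟶ F.obj (z.obj 0)) (fₙ : a ⟶ F.obj (z.obj (Fin.last z.len))) : Prop :=
  ∃ f : ∀ k : Fin (z.len + 1), a ⟶ F.obj (z.obj k),
    f 0 = f₀ ∧ f (Fin.last z.len) = fₙ ∧
    ∀ k : Fin z.len,
      match z.hom k with
      | Sum.inl g => f k.castSucc ≫ F.map g = f k.succ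
      | Sum.inr g => f k.succ ≫ F.map g = f k.castSucc

/-- if `R : Γ ⥤ GM` satisfies the incrementality condition, then any zig-zag
`z` in `Γ` linking `x₀ : yoneda.obj c ⟶ R (z.obj 0)` and `xₙ : yoneda.obj c ⟶ R (z.obj last)`
through `R` can be replaced by a zig-zag of length 2 of the form
`z.obj 0 ⟵ γ' ⟶ z.obj last` linking `x₀` and `xₙ` through `R`: explicitly, there are
`π₁ : γ' ⟶ z.obj 0`, `π₂ : γ' ⟶ z.obj last` and `x : yoneda.obj c ⟶ R.obj γ'` with
`x₀ = R(π₁) ∘ x` and `xₙ = R(π₂) ∘ x`. -/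
theorem stmt6 {C : Type u} [SmallCategory C] {Γ : Type v} [Category Γ]
    (R : Γ ⥤ (Cᵒᵖ ⥤ Type u))
    (hinc : ∀ {γ₁ γ γ₂ : Γ} (i₁ : γ₁ ⟶ γ) (i₂ : γ₂ ⟶ γ) (c : C)
      (x₁ : yoneda.obj c ⟶ R.obj γ₁) (x₂ : yoneda.obj c ⟶ R.obj γ₂),
      x₁ ≫ R.map i₁ = x₂ ≫ R.map i₂ →
      ∃ (γ' : Γ) (π₁ : γ' ⟶ γ₁) (π₂ : γ' ⟶ γ₂) (x : yoneda.obj c ⟶ R.obj γ'),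
        π₁ ≫ i₁ = π₂ ≫ i₂ ∧ x ≫ R.map π₁ = x₁ ∧ x ≫ R.map π₂ = x₂)
    (z : Zigzag Γ) (c : C)
    (x₀ : yoneda.obj c ⟶ R.obj (z.obj 0))
    (xₙ : yoneda.obj c ⟶ R.obj (z.obj (Fin.last z.len)))
    (hlink : z.Links R x₀ xₙ) :
    ∃ (γ' : Γ) (π₁ : γ' ⟶ z.obj 0) (π₂ : γ' ⟶ z.obj (Fin.last z.len))
      (x : yoneda.obj c ⟶ R.obj γ'),
      x ≫ R.map π₁ = x₀ ∧ x ≫ R.map π₂ = xₙ := by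
  obtain ⟨f, hf0, hfn, hstep⟩ := hlink
  have key : ∀ k : ℕ, ∀ hk : k ≤ z.len,
      ∃ (γ' : Γ) (π₁ : γ' ⟶ z.obj 0) (π₂ : γ' ⟶ z.obj ⟨k, Nat.lt_succ_of_le hk⟩)
        (x : yoneda.obj c ⟶ R.obj γ'),
        x ≫ R.map π₁ = f 0 ∧ x ≫ R.map π₂ = f ⟨k, Nat.lt_succ_of_le hk⟩ := by
    intro k
    induction k with
    | zero =>
      intro hk
      refine ⟨z.obj 0, 𝟙 _, 𝟙 _, f 0, by simp, by simp⟩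
    | succ k ih =>
      intro hk
      have hk' : k < z.len := hk
      obtain ⟨γ', π₁, π₂, x, hx1, hx2⟩ := ih (Nat.le_of_lt hk')
      have hs := hstep ⟨k, hk'⟩
      have hcs : (⟨k, hk'⟩ : Fin z.len).castSucc = ⟨k, Nat.lt_succ_of_le hk'.le⟩ := rfl
      have hsu : (⟨k, hk'⟩ : Fin z.len).succ = ⟨k + 1, Nat.lt_succ_of_le hk⟩ := rfl
      cases h : z.hom ⟨k, hk'⟩ with
      | inl g =>
        rw [h] at hs
        refine ⟨γ', π₁, π₂ ≫ g, x, hx1, ?_⟩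
        rw [R.map_comp, ← Category.assoc, hx2]
        exact hs
      | inr g =>
        rw [h] at hs
        have : x ≫ R.map π₂ = f (⟨k, hk'⟩ : Fin z.len).succ ≫ R.map g := by
          rw [hx2, hs]; rfl
        obtain ⟨γ'', q₁, q₂, x', _, hq1, hq2⟩ := hinc π₂ g c x _ this
        exact ⟨γ'', q₁ ≫ π₁, q₂, x', by rw [R.map_comp, ← Category.assoc, hq1, hx1],
          hq2⟩
  obtain ⟨γ', π₁, π₂, x, h1, h2⟩ := key z.len le_rfl
  exact ⟨γ', π₁, π₂, x, by rw [h1, hf0], by rw [← hfn]; exact h2⟩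
end

section
/- Let T = ⟨Γ, L, R⟩ be an incremental rule system on presheaves over a small category C, with Γ small. Then T is a global transformation: for every monomorphism h : p ⟶ p' of presheaves, the induced morphism T̄(h) : T̄(p) ⟶ T̄(p') — the unique morphism satisfying T̄(h) ∘ ι_{⟨γ,m⟩} = ι'_{⟨γ, h∘m⟩} for every object ⟨γ, m⟩ of L/p, where ι and ι' are the colimit components of T̄(p) and T̄(p') respectively — is a monomorphism. -/
/-!
An element of `T̄(p)(k)` is represented by an instance `n` of `p` and an element of `R(n)(k)`, and
two representatives are identified by a zigzag of instance morphisms. Incrementality collapses any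
such zigzag to a single span: a common element over an instance mapping to both. If the images of
two elements are identified in `T̄(p')`, the apex of the span is an instance of `p'` whose match
factors through the mono `h`, so the span already lives in `L/p` and the elements were equal.
-/

open CategoryTheory CategoryTheory.Limits

universe u

variable (C : Type u) [SmallCategory C]

variable {C}

/-- `f` is "the induced morphism `T̄(h) : T̄(p) ⟶ T̄(p')`" for a monomorphism `h : p ⟶ p'`:
it satisfies `T̄(h) ∘ ι_{⟨γ,m⟩} = ι'_{⟨γ, h ∘ m⟩}` for every object `⟨γ, m⟩` of `L/p`,
where `ι`, `ι'` are the colimit components of `T̄(p) = colimit (DT T p)` and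
`T̄(p') = colimit (DT T p')`. -/
def IsTbarMap (T : RuleSystem C) {p p' : GM C} (h : p ⟶ p') [Mono h]
    (f : colimit (DT T p) ⟶ colimit (DT T p')) : Prop :=
  ∀ n : Inst T p,
    colimit.ι (DT T p) n ≫ f =
      colimit.ι (DT T p')
        ⟨CostructuredArrow.mk (n.1.hom ≫ h), by haveI := n.2; exact mono_comp _ _⟩

namespace CategoryTheory.Functor

universe w
variable {J : Type*} [Category J]

def LiftsCospansToSpans (F : J ⥤ Type w) : Prop :=
  ∀ ⦃a b c : J⦄ (f : a ⟶ c) (g : b ⟶ c) (x : F.obj a) (y : F.obj b), F.map f x = F.map g y →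
    ∃ (s : J) (u : s ⟶ a) (v : s ⟶ b) (z : F.obj s), F.map u z = x ∧ F.map v z = y

variable {F : J ⥤ Type w}

theorem LiftsCospansToSpans.exists_span_of_eqvGen (hF : F.LiftsCospansToSpans)
    {a b : Σ j, F.obj j} (hab : Relation.EqvGen F.ColimitTypeRel a b) :
    ∃ (s : J) (u : s ⟶ a.1) (v : s ⟶ b.1) (z : F.obj s), F.map u z = a.2 ∧ F.map v z = b.2 := by
  induction hab with
  | rel a b hab =>
    obtain ⟨g, hg⟩ := hab
    exact ⟨a.1, 𝟙 _, g, a.2, F.map_id_apply _ _, hg.symm⟩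
  | refl a => exact ⟨a.1, 𝟙 _, 𝟙 _, a.2, F.map_id_apply _ _, F.map_id_apply _ _⟩
  | symm a b _ ih =>
    obtain ⟨s, u, v, z, hu, hv⟩ := ih
    exact ⟨s, v, u, z, hv, hu⟩
  | trans a b c _ _ ih₁ ih₂ =>
    obtain ⟨s, u, v, z, hu, hv⟩ := ih₁
    obtain ⟨s', u', v', z', hu', hv'⟩ := ih₂
    obtain ⟨t, π, π', w, hπ, hπ'⟩ := hF v u' z z' (hv.trans hu'.symm)
    refine ⟨t, π ≫ u, π' ≫ v', w, ?_, ?_⟩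
    · rw [Functor.map_comp_apply, hπ, hu]
    · rw [Functor.map_comp_apply, hπ', hv']

theorem LiftsCospansToSpans.exists_span_of_isColimit (hF : F.LiftsCospansToSpans)
    {t : Limits.Cocone F} (ht : Limits.IsColimit t) {i j : J} {x : F.obj i} {y : F.obj j}
    (hxy : t.ι.app i x = t.ι.app j y) :
    ∃ (s : J) (u : s ⟶ i) (v : s ⟶ j) (z : F.obj s), F.map u z = x ∧ F.map v z = y := by
  have hc := (Limits.Types.isColimit_iff_coconeTypesIsColimit t).1 ⟨ht⟩
  refine hF.exists_span_of_eqvGen ((F.ιColimitType_eq_iff x y).1 ?_)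
  rw [← hc.equiv_symm_ι_apply, ← hc.equiv_symm_ι_apply]
  exact congrArg _ hxy

end CategoryTheory.Functor

def RuleSystem.IsIncremental (T : RuleSystem C) : Prop :=
  ∀ {γ₁ γ γ₂ : T.Γ} (i₁ : γ₁ ⟶ γ) (i₂ : γ₂ ⟶ γ) (c : C)
    (x₁ : yoneda.obj c ⟶ T.R.obj γ₁) (x₂ : yoneda.obj c ⟶ T.R.obj γ₂),
    x₁ ≫ T.R.map i₁ = x₂ ≫ T.R.map i₂ →
    ∃ (γ' : T.Γ) (π₁ : γ' ⟶ γ₁) (π₂ : γ' ⟶ γ₂) (x : yoneda.obj c ⟶ T.R.obj γ'),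
      π₁ ≫ i₁ = π₂ ≫ i₂ ∧ x ≫ T.R.map π₁ = x₁ ∧ x ≫ T.R.map π₂ = x₂

namespace Inst

variable {T : RuleSystem C} {q q' : GM C}

def rule (n : Inst T q) : T.Γ := n.obj.left

def arrow (n : Inst T q) : T.L.obj n.rule ⟶ q := n.obj.hom

instance (n : Inst T q) : Mono n.arrow := n.2

def ruleHom {a b : Inst T q} (e : a ⟶ b) : a.rule ⟶ b.rule := e.hom.left

lemma w {a b : Inst T q} (e : a ⟶ b) : T.L.map (ruleHom e) ≫ b.arrow = a.arrow :=
  CostructuredArrow.w e.hom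

def homMk {a b : Inst T q} (g : a.rule ⟶ b.rule) (w : T.L.map g ≫ b.arrow = a.arrow) :
    a ⟶ b :=
  ObjectProperty.homMk (CostructuredArrow.homMk g w)

def restrict (n : Inst T q) {γ : T.Γ} (π : γ ⟶ n.rule) : Inst T q :=
  ⟨CostructuredArrow.mk (T.L.map π ≫ n.arrow), by
    have := T.monoL π; exact mono_comp _ _⟩

def restrictHom (n : Inst T q) {γ : T.Γ} (π : γ ⟶ n.rule) : n.restrict π ⟶ n :=
  homMk π rfl

def push (h : q ⟶ q') [Mono h] (n : Inst T q) : Inst T q' :=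
  ⟨CostructuredArrow.mk (n.arrow ≫ h), mono_comp _ _⟩

def homOfPushSpan (h : q ⟶ q') [Mono h] {n₁ n₂ : Inst T q} {s : Inst T q'}
    (u : s ⟶ n₁.push h) (v : s ⟶ n₂.push h) : n₁.restrict (ruleHom (b := n₁.push h) u) ⟶ n₂ :=
  homMk (ruleHom (b := n₂.push h) v) <| by
    rw [← cancel_mono h, Category.assoc]
    exact (w v).trans (w u).symm

end Inst

theorem RuleSystem.IsIncremental.exists_span {T : RuleSystem C} (hT : T.IsIncremental)
    {q : GM C} {a b c : Inst T q} (f : a ⟶ c) (g : b ⟶ c) (k : Cᵒᵖ)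
    (x : (T.R.obj a.rule).obj k) (y : (T.R.obj b.rule).obj k)
    (hxy : (T.R.map (Inst.ruleHom f)).app k x = (T.R.map (Inst.ruleHom g)).app k y) :
    ∃ (s : Inst T q) (u : s ⟶ a) (v : s ⟶ b) (z : (T.R.obj s.rule).obj k),
      (T.R.map (Inst.ruleHom u)).app k z = x ∧ (T.R.map (Inst.ruleHom v)).app k z = y := by
  obtain ⟨γ, π₁, π₂, z, hπ, hz₁, hz₂⟩ :=
    hT (Inst.ruleHom f) (Inst.ruleHom g) k.unop (yonedaEquiv.symm x) (yonedaEquiv.symm y) (by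
      rw [yonedaEquiv_symm_naturality_right, yonedaEquiv_symm_naturality_right, hxy])
  have hw : T.L.map π₂ ≫ b.arrow = T.L.map π₁ ≫ a.arrow := by
    rw [← Inst.w f, ← Inst.w g, ← Category.assoc, ← Category.assoc, ← T.L.map_comp,
      ← T.L.map_comp, hπ]
  refine ⟨a.restrict π₁, a.restrictHom π₁, Inst.homMk π₂ hw, yonedaEquiv z, ?_, ?_⟩
  · have h1 := congrArg yonedaEquiv hz₁
    rw [yonedaEquiv_comp, Equiv.apply_symm_apply] at h1
    exact h1
  · have h2 := congrArg yonedaEquiv hz₂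
    rw [yonedaEquiv_comp, Equiv.apply_symm_apply] at h2
    exact h2

theorem RuleSystem.IsIncremental.liftsCospansToSpans {T : RuleSystem C} (hT : T.IsIncremental)
    (q : GM C) (k : Cᵒᵖ) : (DT T q ⋙ (evaluation Cᵒᵖ (Type u)).obj k).LiftsCospansToSpans :=
  fun _ _ _ f g x y hxy ↦ hT.exists_span f g k x y hxy

section PresheafColimits

variable {J : Type u} [SmallCategory J] {D : Type*} [Category D] (F : J ⥤ D ⥤ Type u)

theorem colimit_ι_app_jointly_surjective {k : D} (t : (colimit F).obj k) :
    ∃ (j : J) (x : (F.obj j).obj k), (colimit.ι F j).app k x = t :=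
  Types.jointly_surjective_of_isColimit
    (isColimitOfPreserves ((evaluation D (Type u)).obj k) (colimit.isColimit F)) t

variable {F}

theorem colimit_ι_app_map_eq_of_span {s a b : J} (u : s ⟶ a) (v : s ⟶ b) {k : D}
    (z : (F.obj s).obj k) :
    (colimit.ι F a).app k ((F.map u).app k z) = (colimit.ι F b).app k ((F.map v).app k z) := by
  simp only [← NatTrans.comp_app_apply, colimit.w]

theorem Functor.LiftsCospansToSpans.exists_span_of_colimit_ι_app_eq {k : D}
    (hF : (F ⋙ (evaluation D (Type u)).obj k).LiftsCospansToSpans) {i j : J}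
    {x : (F.obj i).obj k} {y : (F.obj j).obj k}
    (hxy : (colimit.ι F i).app k x = (colimit.ι F j).app k y) :
    ∃ (s : J) (u : s ⟶ i) (v : s ⟶ j) (z : (F.obj s).obj k),
      (F.map u).app k z = x ∧ (F.map v).app k z = y :=
  hF.exists_span_of_isColimit
    (isColimitOfPreserves ((evaluation D (Type u)).obj k) (colimit.isColimit F)) hxy

end PresheafColimits

theorem IsTbarMap.app_colimit_ι_app {T : RuleSystem C} {p p' : GM C} {h : p ⟶ p'} [Mono h]
    {f : colimit (DT T p) ⟶ colimit (DT T p')} (hf : IsTbarMap T h f) (n : Inst T p) {k : Cᵒᵖ}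
    (x : ((DT T p).obj n).obj k) :
    f.app k ((colimit.ι (DT T p) n).app k x) = (colimit.ι (DT T p') (n.push h)).app k x := by
  have := ConcreteCategory.congr_hom (NatTrans.congr_app (hf n) k) x
  rwa [NatTrans.comp_app, ConcreteCategory.comp_apply] at this

/-- an incremental rule system is a global transformation: for every
monomorphism `h : p ⟶ p'` of presheaves, the induced morphism `T̄(h) : T̄(p) ⟶ T̄(p')`
(the unique morphism satisfying `T̄(h) ∘ ι_{⟨γ,m⟩} = ι'_{⟨γ, h∘m⟩}` for every object
`⟨γ, m⟩` of `L/p`) is a monomorphism. -/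
theorem stmt7 (T : RuleSystem C)
    (hinc : ∀ {γ₁ γ γ₂ : T.Γ} (i₁ : γ₁ ⟶ γ) (i₂ : γ₂ ⟶ γ) (c : C)
      (x₁ : yoneda.obj c ⟶ T.R.obj γ₁) (x₂ : yoneda.obj c ⟶ T.R.obj γ₂),
      x₁ ≫ T.R.map i₁ = x₂ ≫ T.R.map i₂ →
      ∃ (γ' : T.Γ) (π₁ : γ' ⟶ γ₁) (π₂ : γ' ⟶ γ₂) (x : yoneda.obj c ⟶ T.R.obj γ'),
        π₁ ≫ i₁ = π₂ ≫ i₂ ∧ x ≫ T.R.map π₁ = x₁ ∧ x ≫ T.R.map π₂ = x₂)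
    {p p' : GM C} (h : p ⟶ p') [Mono h]
    (f : colimit (DT T p) ⟶ colimit (DT T p')) (hf : IsTbarMap T h f) :
    Mono f := by
  have hT : T.IsIncremental := hinc
  have hinj (k : Cᵒᵖ) : Function.Injective (f.app k) := by
    intro A B hAB
    obtain ⟨n₁, x₁, rfl⟩ := colimit_ι_app_jointly_surjective _ A
    obtain ⟨n₂, x₂, rfl⟩ := colimit_ι_app_jointly_surjective _ B
    rw [hf.app_colimit_ι_app, hf.app_colimit_ι_app] at hAB
    obtain ⟨s, u, v, z, rfl, rfl⟩ :=
      Functor.LiftsCospansToSpans.exists_span_of_colimit_ι_app_eq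
        (hT.liftsCospansToSpans p' k) hAB
    exact colimit_ι_app_map_eq_of_span (F := DT T p) (n₁.restrictHom _)
      (Inst.homOfPushSpan h u v) z
  have (k : Cᵒᵖ) : Mono (f.app k) := (mono_iff_injective _).2 (hinj k)
  exact NatTrans.mono_of_mono_app f
end
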